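/- The minimum distance of the Berman code Ber_n^{r}(m) is 2^{r+1} for 0 ≤ r ≤ m−1, and the minimum distance of the Dual Berman code B_n^{r}(m) is n^{m−r} for 0 ≤ r ≤ m. -/

import Mathlib

open scoped BigOperators

/-- The `l`-th block (of length `n^m`) of a vector of length `n^(m+1)`,
where the first coordinate of the index tuple selects the block. -/
def blockAt (n m : ℕ) (l : Fin n) (v : (Fin (m + 1) → Fin n) → ZMod 2) :
    (Fin m → Fin n) → ZMod 2 :=
  fun j => v (Fin.cons l j)

/-- Berman code `Ber_n^r(m) ⊆ F_2^{n^m}`, coordinates indexed by `H^m` with `H = Fin n`.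
`Ber_n^m(m) = {0}`, `Ber_n^0(m)` is the single parity-check code, and for `1 ≤ r`,
a codeword is a concatenation `(v_0|…|v_{n-1})` with each block in `Ber_n^{r-1}(m-1)`
and the sum of the blocks in `Ber_n^r(m-1)`. -/
def Ber (n : ℕ) : ℕ → (m : ℕ) → Set ((Fin m → Fin n) → ZMod 2)
  | _, 0 => {0}
  | 0, (m + 1) => {c | ∑ i, c i = 0}
  | (r + 1), (m + 1) =>
      {v | (∀ l : Fin n, blockAt n m l v ∈ Ber n r m) ∧
        (fun j => ∑ l : Fin n, v (Fin.cons l j)) ∈ Ber n (r + 1) m}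

/-- Dual Berman code `B_n^r(m) ⊆ F_2^{n^m}`.
`B_n^m(m)` is the full space, `B_n^0(m)` is the repetition code, and for `1 ≤ r`,
a codeword is `(u+u_0|…|u+u_{n-2}|u)` with each `u_l ∈ B_n^{r-1}(m-1)` and `u ∈ B_n^r(m-1)`. -/
def DBer (n : ℕ) : ℕ → (m : ℕ) → Set ((Fin m → Fin n) → ZMod 2)
  | _, 0 => Set.univ
  | 0, (m + 1) => {c | ∃ a : ZMod 2, c = fun _ => a}
  | (r + 1), (m + 1) =>
      {v | ∃ u ∈ DBer n (r + 1) m, ∃ w : Fin n → ((Fin m → Fin n) → ZMod 2),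
        (∀ l, w l ∈ DBer n r m) ∧
        (∀ l : Fin n, blockAt n m l v = if l.val = n - 1 then u else u + w l)}

/-- Star product of two codes: the span of all coordinatewise products. -/
def starProd {ι : Type*} (C D : Set (ι → ZMod 2)) : Submodule (ZMod 2) (ι → ZMod 2) :=
  Submodule.span (ZMod 2) {x | ∃ c ∈ C, ∃ d ∈ D, x = c * d}

/-- Dual code w.r.t. the standard bilinear form. -/
def dualCode {ι : Type*} [Fintype ι] (C : Set (ι → ZMod 2)) : Set (ι → ZMod 2) :=
  {x | ∀ c ∈ C, ∑ i, x i * c i = 0}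

/-- Partial order on tuples: `j ⪯ i` iff `supp(j) ⊆ supp(i)` and `j` agrees with `i` on
`supp(j)`. -/
def preceq {n m : ℕ} (j i : Fin m → Fin n) : Prop :=
  ∀ s, (j s).val ≠ 0 → j s = i s

instance {n m : ℕ} (j i : Fin m → Fin n) : Decidable (preceq j i) := by
  unfold preceq; infer_instance

/-- Hamming weight of a tuple in `H^m`: the number of nonzero entries. -/
def tupleWt {n m : ℕ} (j : Fin m → Fin n) : ℕ :=
  (Finset.univ.filter fun s => (j s).val ≠ 0).card

/-- The vector `c_m(i')`, the indicator of `{i : i ⪯ i'}`. -/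
def cm {n m : ℕ} (i' : Fin m → Fin n) : (Fin m → Fin n) → ZMod 2 :=
  fun i => if preceq i i' then 1 else 0

/-- The vector `d_m(i')`, the indicator of `{i : i ⪰ i'}`. -/
def dm {n m : ℕ} (i' : Fin m → Fin n) : (Fin m → Fin n) → ZMod 2 :=
  fun i => if preceq i' i then 1 else 0

/-- Standard basis vector of `F_2^{n^m}` at coordinate `v`. -/
def eVec {n m : ℕ} (v : Fin m → Fin n) : (Fin m → Fin n) → ZMod 2 :=
  fun i => if i = v then 1 else 0

/-!
Both bounds go by induction on `m`, splitting a word of length `n^(m+1)` into its `n` blocks,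
whose weights add up to the weight of the word.

For a nonzero Berman codeword, either the sum of its blocks is a nonzero codeword of
`Ber_n^r(m-1)`, and the weight of a sum is at most the sum of the weights, or the blocks sum to
zero, so that at least two of them are nonzero codewords of `Ber_n^{r-1}(m-1)`.

For a nonzero dual Berman codeword `(u+u_0|…|u+u_{n-2}|u)`, either some `u_l ≠ 0`, and then
`wt(u + u_l) + wt(u) ≥ wt(u_l) ≥ n^{m-r}`, or all `n` blocks equal `u ≠ 0`.

The bounds are attained by a minimum-weight codeword of the smaller code placed in two blocks
(Berman codes) or in one block (dual Berman codes).
-/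

open Finset

section HammingWeight

variable {ι β : Type*} [Fintype ι] [AddCommGroup β] [DecidableEq β]

theorem hammingNorm_neg (x : ι → β) : hammingNorm (-x) = hammingNorm x := by
  simp [hammingNorm]

theorem hammingNorm_add_le (x y : ι → β) :
    hammingNorm (x + y) ≤ hammingNorm x + hammingNorm y :=
  calc hammingNorm (x + y) = hammingDist (-x) y := by rw [hammingDist_eq_hammingNorm, neg_neg]
    _ ≤ hammingDist (-x) 0 + hammingDist 0 y := hammingDist_triangle _ _ _
    _ = hammingNorm x + hammingNorm y := by
        rw [hammingDist_zero_right, hammingDist_zero_left, hammingNorm_neg]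

theorem hammingNorm_le_hammingNorm_add_add_hammingNorm (u w : ι → β) :
    hammingNorm w ≤ hammingNorm (u + w) + hammingNorm u :=
  calc hammingNorm w = hammingNorm ((u + w) + -u) := by rw [add_neg_cancel_comm]
    _ ≤ hammingNorm (u + w) + hammingNorm u := by
        simpa only [hammingNorm_neg] using hammingNorm_add_le (u + w) (-u)

theorem hammingNorm_sum_le {κ : Type*} (s : Finset κ) (f : κ → ι → β) :
    hammingNorm (∑ l ∈ s, f l) ≤ ∑ l ∈ s, hammingNorm (f l) :=
  le_sum_of_subadditive _ hammingNorm_zero.le hammingNorm_add_le s f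

theorem hammingNorm_ite_mem [DecidableEq ι] (s : Finset ι) {a : β} (ha : a ≠ 0) :
    hammingNorm (fun i => if i ∈ s then a else 0) = #s := by
  simp [hammingNorm, ha]

theorem hammingNorm_const {a : β} (ha : a ≠ 0) :
    hammingNorm (fun _ : ι => a) = Fintype.card ι := by
  classical
  simpa using hammingNorm_ite_mem univ ha

end HammingWeight

theorem sum_eq_hammingNorm {ι : Type*} [Fintype ι] (c : ι → ZMod 2) :
    ∑ i, c i = (hammingNorm c : ZMod 2) := by
  have hbit : ∀ x : ZMod 2, x = if x ≠ 0 then 1 else 0 := by decide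
  rw [hammingNorm, ← sum_boole]
  exact sum_congr rfl fun i _ => hbit (c i)

theorem exists_ne_ne_zero_of_sum_eq_zero {ι M : Type*} [Fintype ι] [AddCommMonoid M]
    {f : ι → M} (hf : ∑ i, f i = 0) {a : ι} (ha : f a ≠ 0) : ∃ b ≠ a, f b ≠ 0 := by
  by_contra! h
  exact ha (by rwa [Fintype.sum_eq_single a h] at hf)

theorem add_le_sum_of_ne {ι : Type*} [Fintype ι] [DecidableEq ι] (f : ι → ℕ) {a b : ι}
    (hab : a ≠ b) : f a + f b ≤ ∑ i, f i := by
  rw [← sum_pair hab]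
  exact sum_le_sum_of_subset (subset_univ _)

section Blocks

variable {n m : ℕ}

def ofBlocks (f : Fin n → (Fin m → Fin n) → ZMod 2) : (Fin (m + 1) → Fin n) → ZMod 2 :=
  fun i => f (i 0) (Fin.tail i)

@[simp]
theorem blockAt_ofBlocks (f : Fin n → (Fin m → Fin n) → ZMod 2) (l : Fin n) :
    blockAt n m l (ofBlocks f) = f l := by
  funext j
  simp [blockAt, ofBlocks]

@[simp]
theorem blockAt_zero (l : Fin n) : blockAt n m l 0 = 0 := rfl

theorem ext_blockAt {v w : (Fin (m + 1) → Fin n) → ZMod 2}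
    (h : ∀ l, blockAt n m l v = blockAt n m l w) : v = w := by
  funext i
  simpa [blockAt] using congrFun (h (i 0)) (Fin.tail i)

theorem hammingNorm_eq_sum_blockAt (v : (Fin (m + 1) → Fin n) → ZMod 2) :
    hammingNorm v = ∑ l, hammingNorm (blockAt n m l v) := by
  unfold hammingNorm blockAt
  simp only [card_filter]
  rw [← Fintype.sum_equiv (Fin.consEquiv fun _ => Fin n)
    (fun p => if v (Fin.cons p.1 p.2) ≠ 0 then 1 else 0) _ fun _ => rfl, Fintype.sum_prod_type]

theorem hammingNorm_ofBlocks (f : Fin n → (Fin m → Fin n) → ZMod 2) :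
    hammingNorm (ofBlocks f) = ∑ l, hammingNorm (f l) := by
  simp [hammingNorm_eq_sum_blockAt]

theorem hammingNorm_ofBlocks_ite (p : Fin n → Prop) [DecidablePred p]
    (c : (Fin m → Fin n) → ZMod 2) :
    hammingNorm (ofBlocks fun l => if p l then c else 0) = #{l | p l} * hammingNorm c := by
  simp [hammingNorm_ofBlocks, apply_ite, sum_ite]

end Blocks

section Berman

variable {n : ℕ}

theorem mem_Ber_succ_succ {r m : ℕ} {v : (Fin (m + 1) → Fin n) → ZMod 2} :
    v ∈ Ber n (r + 1) (m + 1) ↔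
      (∀ l, blockAt n m l v ∈ Ber n r m) ∧ ∑ l, blockAt n m l v ∈ Ber n (r + 1) m := by
  have hsum : (fun j => ∑ l : Fin n, v (Fin.cons l j)) = ∑ l, blockAt n m l v := by
    funext j
    simp [blockAt]
  rw [← hsum]
  rfl

theorem zero_mem_Ber : ∀ {r m : ℕ}, (0 : (Fin m → Fin n) → ZMod 2) ∈ Ber n r m
  | r, 0 => by cases r <;> rfl
  | 0, m + 1 => by simp [Ber]
  | r + 1, m + 1 => mem_Ber_succ_succ.2 ⟨fun _ => zero_mem_Ber, by simpa using zero_mem_Ber⟩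

theorem two_pow_le_hammingNorm_of_mem_Ber :
    ∀ {r m : ℕ} {c : (Fin m → Fin n) → ZMod 2},
      c ∈ Ber n r m → c ≠ 0 → 2 ^ (r + 1) ≤ hammingNorm c
  | r, 0, c, hc, hc0 => absurd (by cases r <;> exact hc) hc0
  | 0, m + 1, c, hc, hc0 => by
      have heven : ((hammingNorm c : ℕ) : ZMod 2) = 0 := (sum_eq_hammingNorm c).symm.trans hc
      obtain ⟨k, hk⟩ := (ZMod.natCast_eq_zero_iff _ _).1 heven
      have := hammingNorm_pos_iff.2 hc0
      omega
  | r + 1, m + 1, v, hv, hv0 => by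
      obtain ⟨hblocks, hsum⟩ := mem_Ber_succ_succ.1 hv
      rw [hammingNorm_eq_sum_blockAt]
      by_cases hs : ∑ l, blockAt n m l v = 0
      · obtain ⟨a, ha⟩ : ∃ a, blockAt n m a v ≠ 0 := by
          by_contra! h
          exact hv0 (ext_blockAt fun l => by simp [h])
        obtain ⟨b, hba, hb⟩ := exists_ne_ne_zero_of_sum_eq_zero hs ha
        calc 2 ^ (r + 1 + 1) = 2 ^ (r + 1) + 2 ^ (r + 1) := by ring
          _ ≤ hammingNorm (blockAt n m a v) + hammingNorm (blockAt n m b v) :=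
            add_le_add (two_pow_le_hammingNorm_of_mem_Ber (hblocks a) ha)
              (two_pow_le_hammingNorm_of_mem_Ber (hblocks b) hb)
          _ ≤ _ := add_le_sum_of_ne (fun l => hammingNorm (blockAt n m l v)) hba.symm
      · exact (two_pow_le_hammingNorm_of_mem_Ber hsum hs).trans (hammingNorm_sum_le _ _)

theorem exists_mem_Ber_hammingNorm_eq (hn : 2 ≤ n) :
    ∀ {r m : ℕ}, r < m → ∃ c ∈ Ber n r m, hammingNorm c = 2 ^ (r + 1)
  | 0, m + 1, _ => by
      let a : Fin (m + 1) → Fin n := fun _ => ⟨0, by omega⟩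
      let b : Fin (m + 1) → Fin n := fun _ => ⟨1, hn⟩
      have hab : a ≠ b := fun h => by simpa [a, b] using congrFun h 0
      have hwt := hammingNorm_ite_mem {a, b} (one_ne_zero (α := ZMod 2))
      rw [card_pair hab] at hwt
      refine ⟨_, ?_, hwt⟩
      show ∑ i, _ = 0
      rw [sum_eq_hammingNorm, hwt]
      rfl
  | r + 1, m + 1, hr => by
      obtain ⟨c, hc, hwt⟩ := exists_mem_Ber_hammingNorm_eq hn (Nat.lt_of_succ_lt_succ hr)
      have htwo : #{l : Fin n | l.val < 2} = 2 := Fin.card_filter_val_lt.trans (by omega)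
      refine ⟨ofBlocks fun l => if l.val < 2 then c else 0,
        mem_Ber_succ_succ.2 ⟨fun l => ?_, ?_⟩, ?_⟩
      · simp only [blockAt_ofBlocks]
        split_ifs
        exacts [hc, zero_mem_Ber]
      · have hsum : ∑ l : Fin n, (if l.val < 2 then c else 0) = 0 := by
          rw [sum_ite, sum_const, sum_const_zero, htwo, two_nsmul, add_zero]
          exact ZModModule.add_self c
        simpa only [blockAt_ofBlocks, hsum] using zero_mem_Ber
      · rw [hammingNorm_ofBlocks_ite, htwo, hwt, pow_succ' 2 (r + 1)]

end Berman

section DualBerman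

variable {n : ℕ}

theorem zero_mem_DBer : ∀ {r m : ℕ}, (0 : (Fin m → Fin n) → ZMod 2) ∈ DBer n r m
  | r, 0 => by cases r <;> trivial
  | 0, m + 1 => ⟨0, rfl⟩
  | r + 1, m + 1 => ⟨0, zero_mem_DBer, fun _ => 0, fun _ => zero_mem_DBer, fun l => by simp⟩

theorem pow_le_hammingNorm_of_mem_DBer :
    ∀ {r m : ℕ} {c : (Fin m → Fin n) → ZMod 2},
      c ∈ DBer n r m → c ≠ 0 → n ^ (m - r) ≤ hammingNorm c
  | _, 0, _, _, hc0 => by simpa [Nat.one_le_iff_ne_zero] using hc0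
  | 0, m + 1, _, ⟨a, hca⟩, hc0 => by
      subst hca
      have ha : a ≠ 0 := fun h => hc0 (by simp [h]; rfl)
      simp [hammingNorm_const ha]
  | r + 1, m + 1, v, ⟨u, hu, w, hw, hblocks⟩, hv0 => by
      rw [hammingNorm_eq_sum_blockAt, Nat.add_sub_add_right]
      by_cases hw0 : ∃ l : Fin n, l.val ≠ n - 1 ∧ w l ≠ 0
      · obtain ⟨l, hl, hwl⟩ := hw0
        let last : Fin n := ⟨n - 1, by have := l.pos; omega⟩
        have hne : l ≠ last := fun h => hl (by rw [h])
        calc n ^ (m - r) ≤ hammingNorm (w l) := pow_le_hammingNorm_of_mem_DBer (hw l) hwl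
          _ ≤ hammingNorm (u + w l) + hammingNorm u :=
            hammingNorm_le_hammingNorm_add_add_hammingNorm u (w l)
          _ = hammingNorm (blockAt n m l v) + hammingNorm (blockAt n m last v) := by
            rw [hblocks, hblocks, if_neg hl, if_pos rfl]
          _ ≤ _ := add_le_sum_of_ne (fun l => hammingNorm (blockAt n m l v)) hne
      · push Not at hw0
        have hblock_eq : ∀ l, blockAt n m l v = u := fun l => by
          rw [hblocks]
          split_ifs with h
          · rfl
          · rw [hw0 l h, add_zero]
        have hu0 : u ≠ 0 := fun h => hv0 (ext_blockAt fun l => by simp [hblock_eq, h])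
        obtain ⟨i, -⟩ := Function.ne_iff.1 hv0
        simp only [hblock_eq, sum_const, card_univ, Fintype.card_fin, smul_eq_mul]
        calc n ^ (m - r) ≤ n ^ (m - (r + 1) + 1) := Nat.pow_le_pow_right (i 0).pos (by omega)
          _ = n * n ^ (m - (r + 1)) := pow_succ' _ _
          _ ≤ n * hammingNorm u := Nat.mul_le_mul_left n (pow_le_hammingNorm_of_mem_DBer hu hu0)

theorem exists_mem_DBer_hammingNorm_eq (hn : 2 ≤ n) :
    ∀ {r m : ℕ}, r ≤ m → ∃ c ∈ DBer n r m, hammingNorm c = n ^ (m - r)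
  | r, 0, _ => ⟨fun _ => 1, by cases r <;> trivial, by simp [hammingNorm_const]⟩
  | 0, m + 1, _ => ⟨fun _ => 1, ⟨1, rfl⟩, by simp [hammingNorm_const]⟩
  | r + 1, m + 1, hr => by
      obtain ⟨c, hc, hwt⟩ := exists_mem_DBer_hammingNorm_eq hn (Nat.le_of_succ_le_succ hr)
      have hone : #{l : Fin n | l.val < 1} = 1 := Fin.card_filter_val_lt.trans (by omega)
      let w : Fin n → (Fin m → Fin n) → ZMod 2 := fun l => if l.val < 1 then c else 0
      refine ⟨ofBlocks w, ⟨0, zero_mem_DBer, w, fun l => ?_, fun l => ?_⟩, ?_⟩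
      · simp only [w]
        split_ifs
        exacts [hc, zero_mem_DBer]
      · split_ifs with h
        · simp only [blockAt_ofBlocks, w, if_neg (by omega : ¬l.val < 1)]
        · rw [blockAt_ofBlocks, zero_add]
      · rw [hammingNorm_ofBlocks_ite, hone, hwt, one_mul, Nat.add_sub_add_right]

end DualBerman

/-- `d_min(Ber_n^r(m)) = 2^{r+1}` for `0 ≤ r ≤ m-1`, and
`d_min(B_n^r(m)) = n^{m-r}` for `0 ≤ r ≤ m`; the minimum distance being the least Hamming
weight of a nonzero codeword. -/
theorem stmt7 (n m : ℕ) (hn : 2 ≤ n) :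
    (∀ r < m,
      (∃ c ∈ Ber n r m, c ≠ 0 ∧ hammingNorm c = 2 ^ (r + 1)) ∧
      ∀ c ∈ Ber n r m, c ≠ 0 → 2 ^ (r + 1) ≤ hammingNorm c) ∧
    (∀ r ≤ m,
      (∃ c ∈ DBer n r m, c ≠ 0 ∧ hammingNorm c = n ^ (m - r)) ∧
      ∀ c ∈ DBer n r m, c ≠ 0 → n ^ (m - r) ≤ hammingNorm c) := by
  refine ⟨fun r hr => ?_, fun r hr => ?_⟩
  · obtain ⟨c, hc, hwt⟩ := exists_mem_Ber_hammingNorm_eq hn hr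
    exact ⟨⟨c, hc, hammingNorm_ne_zero_iff.1 (by rw [hwt]; positivity), hwt⟩,
      fun _ => two_pow_le_hammingNorm_of_mem_Ber⟩
  · obtain ⟨c, hc, hwt⟩ := exists_mem_DBer_hammingNorm_eq hn hr
    exact ⟨⟨c, hc, hammingNorm_ne_zero_iff.1 (by rw [hwt]; positivity), hwt⟩,
      fun _ => pow_le_hammingNorm_of_mem_DBer⟩
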